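/- arXiv:1104.4573 — 3 statements merged into one kernel-verified Lean document; each statement's English description precedes it below -/
import Mathlib

section
/- Let R be a commutative ring, σ a finite index type, and for n : σ →₀ ℕ let D_n be the divided-power operator on MvPolynomial σ R. Then for all m, n : σ →₀ ℕ one has the composition rule D_m ∘ D_n = (∏ i, Nat.choose (m i + n i) (n i)) • D_{m+n}; in particular D_m ∘ D_n = D_n ∘ D_m. -/
/-- The divided-power operator `D_n` on `MvPolynomial σ R`, determined on monomials by
`D_n (X ^ m) = (∏ i, Nat.choose (m i) (n i)) • X ^ (m - n)` (componentwise truncated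
subtraction). -/
noncomputable def dpOp (R : Type*) [CommRing R] (σ : Type*) [Fintype σ] (n : σ →₀ ℕ) :
    MvPolynomial σ R →ₗ[R] MvPolynomial σ R :=
  (Finsupp.lsum ℕ fun m : σ →₀ ℕ =>
    (∏ i, Nat.choose (m i) (n i)) • (MvPolynomial.monomial (m - n) : R →ₗ[R] MvPolynomial σ R))
    ∘ₗ (AddMonoidAlgebra.coeffLinearEquiv R).toLinearMap

theorem Nat.choose_mul_choose_tsub (k n m : ℕ) :
    k.choose n * (k - n).choose m = (m + n).choose n * k.choose (m + n) := by
  have h := Nat.choose_mul (n := k) (k := m + n) (s := n) (Nat.le_add_left n m)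
  rw [Nat.add_sub_cancel] at h
  rw [← h, Nat.mul_comm]

section

variable (R : Type*) [CommRing R] (σ : Type*) [Fintype σ]

theorem dpOp_monomial (n k : σ →₀ ℕ) (r : R) :
    dpOp R σ n (MvPolynomial.monomial k r)
      = (∏ i, (k i).choose (n i)) • MvPolynomial.monomial (k - n) r := by
  change Finsupp.lsum ℕ _ (Finsupp.single k r) = _
  rw [Finsupp.lsum_single]
  simp

theorem dpOp_comp_dpOp (m n : σ →₀ ℕ) :
    dpOp R σ m ∘ₗ dpOp R σ n = (∏ i, (m i + n i).choose (n i)) • dpOp R σ (m + n) := by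
  refine MvPolynomial.linearMap_ext fun k => LinearMap.ext_ring ?_
  simp only [LinearMap.comp_apply, LinearMap.smul_apply, dpOp_monomial,
    LinearMap.map_smul_of_tower, smul_smul, tsub_tsub, add_comm n m, ← Finset.prod_mul_distrib]
  congr 2 with i
  simpa [add_comm] using Nat.choose_mul_choose_tsub (k i) (n i) (m i)

theorem dpOp_comp_comm (m n : σ →₀ ℕ) :
    dpOp R σ m ∘ₗ dpOp R σ n = dpOp R σ n ∘ₗ dpOp R σ m := by
  rw [dpOp_comp_dpOp, dpOp_comp_dpOp, add_comm n m]
  congr 1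
  exact Finset.prod_congr rfl fun i _ => by rw [add_comm (n i), Nat.choose_symm_add]

end

/-- Composition rule for divided-power operators:
`D_m ∘ D_n = (∏ i, (m i + n i).choose (n i)) • D_(m+n)`; in particular they commute. -/
theorem dpOp_comp_rule (R : Type*) [CommRing R] (σ : Type*) [Fintype σ] :
    ∀ m n : σ →₀ ℕ,
      (dpOp R σ m) ∘ₗ (dpOp R σ n)
          = (∏ i, Nat.choose (m i + n i) (n i)) • dpOp R σ (m + n) ∧
      (dpOp R σ m) ∘ₗ (dpOp R σ n) = (dpOp R σ n) ∘ₗ (dpOp R σ m) :=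
  fun m n => ⟨dpOp_comp_dpOp R σ m n, dpOp_comp_comm R σ m n⟩
end

section
/- Let p be a prime, R a commutative ring, and A a commutative R-algebra of characteristic p. Let D be an R-linear endomorphism of A such that every p-fold iterated commutator with multiplication operators vanishes: for all a₁, …, a_p ∈ A, [[…[D, t_{a₁}], t_{a₂}], …, t_{a_p}] = 0 (i.e. D is a differential operator of order ≤ p − 1). Then D commutes with multiplication by every p-th power: D(a^p * x) = a^p * D(x) for all a, x ∈ A. -/
/-!
Write `T` for multiplication by `a`. With all `aᵢ = a`, the hypothesis says that the `p`-th
power of the operator `E ↦ E T - T E` kills `D`. That operator is the difference of right and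
left multiplication by `T` on `End_R A`, and these two commute. Since `End_R (End_R A)` again
has characteristic `p`, Frobenius gives `(R_T - L_T)^p = R_{T^p} - L_{T^p}`. Hence
`D T^p = T^p D`, and `T^p` is multiplication by `a^p`.
-/

section

open LinearMap

variable {R B : Type*} [CommRing R] [Ring B] [Algebra R B]

instance Module.End.charP_of_algebra (p : ℕ) [CharP B p] : CharP (Module.End R B) p :=
  charP_of_injective_ringHom (Algebra.lmul_injective (R := R) (A := B)) p

theorem mulRight_sub_mulLeft_pow_char (p : ℕ) [Fact p.Prime] [CharP B p] (b : B) :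
    (mulRight R b - mulLeft R b) ^ p = mulRight R (b ^ p) - mulLeft R (b ^ p) := by
  rw [sub_pow_char_of_commute (p := p) (h := (commute_mulLeft_right b b).symm), pow_mulRight,
    pow_mulLeft]

theorem Fin.foldl_commutator_eq_pow_apply (n : ℕ) (b e : B) :
    Fin.foldl n (fun e (_ : Fin n) => e * b - b * e) e =
      ((mulRight R b - mulLeft R b) ^ n) e := by
  induction n generalizing e with
  | zero => simp
  | succ n ih =>
    rw [Fin.foldl_succ, ih, pow_succ, Module.End.mul_apply]
    simp only [map_sub, LinearMap.sub_apply, mulRight_apply, mulLeft_apply]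

end

/-- In characteristic `p`, an `R`-linear endomorphism `D` of `A` all of whose `p`-fold
iterated commutators with multiplication operators vanish (i.e. a differential operator of
order `≤ p - 1`) commutes with multiplication by `p`-th powers. -/
theorem diffOp_order_lt_p_commutes_pow (p : ℕ) (hp : p.Prime) (R A : Type*) [CommRing R]
    [CommRing A] [Algebra R A] [CharP A p] (D : A →ₗ[R] A)
    (hD : ∀ a : Fin p → A,
      Fin.foldl p
        (fun E i => E ∘ₗ LinearMap.mulLeft R (a i) - LinearMap.mulLeft R (a i) ∘ₗ E) D = 0)
    (a x : A) :
    D (a ^ p * x) = a ^ p * D x := by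
  have : Fact p.Prime := ⟨hp⟩
  have hpow : D * LinearMap.mulLeft R a ^ p - LinearMap.mulLeft R a ^ p * D = 0 := by
    have h := hD fun _ => a
    simp only [← Module.End.mul_eq_comp] at h
    rwa [Fin.foldl_commutator_eq_pow_apply (R := R), mulRight_sub_mulLeft_pow_char,
      LinearMap.sub_apply, LinearMap.mulRight_apply, LinearMap.mulLeft_apply] at h
  simpa [LinearMap.pow_mulLeft] using congr($(sub_eq_zero.mp hpow) x)
end

section
/- Let A be a discrete valuation ring and M a finitely generated A-module. Let (M^i)_{i ∈ ℕ} be a decreasing sequence of submodules of M and let M^∞ = ⋂_i M^i. Suppose there exists d such that the quotient M^d / M^∞ is a torsion A-module (equivalently, for every x ∈ M^d there is a nonzero a ∈ A with a • x ∈ M^∞). Then the chain stabilizes at M^∞: there exists d' such that M^i = M^∞ for all i ≥ d'. -/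
/-!
Let `M^∞ = ⨅ i, M^i`. The image `Q` of `M^d` in `M ⧸ M^∞` is finitely generated and torsion, so
it is killed by a single nonzero `a`; since `A ⧸ (a)` has finite length, `Q` is Artinian. The
images of the `M^i` form a decreasing chain in `Q` for `i ≥ d`, hence stabilize, and so do the
`M^i`, all of which contain `M^∞`. A decreasing chain that is eventually constant is eventually
equal to its infimum.
-/

open nonZeroDivisors

theorem isArtinian_of_isTorsionBy {R M : Type*} [CommRing R] [IsNoetherianRing R]
    [Ring.KrullDimLE 1 R] [AddCommGroup M] [Module R M] [Module.Finite R M]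
    {a : R} (ha : a ∈ R⁰) (hM : Module.IsTorsionBy R M a) : IsArtinian R M := by
  have hI : Module.IsTorsionBySet R M (Ideal.span {a}) :=
    (Module.isTorsionBySet_span_singleton_iff a).mpr hM
  let := hI.module
  have : IsArtinian R (R ⧸ Ideal.span {a}) :=
    (isFiniteLength_iff_isNoetherian_isArtinian.mp
      (isFiniteLength_quotient_span_singleton R ha)).2
  have : IsArtinianRing (R ⧸ Ideal.span {a}) := isArtinian_of_tower R this
  have : Module.Finite (R ⧸ Ideal.span {a}) M := Module.Finite.of_restrictScalars_finite R _ _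
  exact isArtinian_of_surjective_algebraMap (R := R ⧸ Ideal.span {a}) Ideal.Quotient.mk_surjective

theorem isArtinian_of_isTorsion {R M : Type*} [CommRing R] [IsNoetherianRing R]
    [Ring.KrullDimLE 1 R] [AddCommGroup M] [Module R M] [Module.Finite R M]
    (hM : Module.IsTorsion R M) : IsArtinian R M := by
  obtain ⟨a, ha_ann, ha⟩ := Submodule.annihilator_top_inter_nonZeroDivisors hM
  exact isArtinian_of_isTorsionBy ha fun x ↦
    Submodule.mem_annihilator.mp ha_ann x Submodule.mem_top

theorem Submodule.isTorsion_map_mkQ {R M : Type*} [CommRing R] [AddCommGroup M] [Module R M]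
    {P L : Submodule R M} (h : ∀ x ∈ P, ∃ a ∈ R⁰, a • x ∈ L) :
    Module.IsTorsion R (P.map L.mkQ) := by
  rintro ⟨_, x, hx, rfl⟩
  obtain ⟨a, ha, hax⟩ := h x hx
  refine ⟨⟨a, ha⟩, Subtype.ext ?_⟩
  rw [Submonoid.smul_def]
  exact (Submodule.Quotient.mk_eq_zero L).mpr hax

theorem IsArtinian.exists_forall_ge_eq_of_antitone {R M : Type*} [Ring R] [AddCommGroup M]
    [Module R M] (Q : Submodule R M) [IsArtinian R Q] {f : ℕ → Submodule R M}
    (hf : Antitone f) {d : ℕ} (hd : f d ≤ Q) : ∃ n, ∀ m ≥ n, f m = f n := by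
  obtain ⟨n, hn⟩ := IsArtinian.monotone_stabilizes
    ⟨fun i ↦ OrderDual.toDual ((f i).comap Q.subtype), fun _ _ h ↦ Submodule.comap_mono (hf h)⟩
  have hfQ : ∀ m ≥ max n d, f m = Q ⊓ f m := fun m hm ↦
    (inf_eq_right.mpr ((hf (le_of_max_le_right hm)).trans hd)).symm
  refine ⟨max n d, fun m hm ↦ ?_⟩
  have hcomap : ∀ m ≥ n, (f m).comap Q.subtype = (f n).comap Q.subtype :=
    fun m hm ↦ (hn m hm).symm
  rw [hfQ m hm, hfQ _ le_rfl, ← Submodule.map_comap_subtype, ← Submodule.map_comap_subtype,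
    hcomap m (le_of_max_le_left hm), hcomap _ (le_max_left n d)]

theorem Antitone.forall_ge_eq_iInf {α : Type*} [CompleteLattice α] {f : ℕ → α}
    (hf : Antitone f) {n : ℕ} (hn : ∀ m ≥ n, f m = f n) : ∀ m ≥ n, f m = ⨅ i, f i := by
  intro m hm
  refine le_antisymm (le_iInf fun j ↦ ?_) (iInf_le f m)
  rw [hn m hm]
  rcases le_total j n with hj | hj
  · exact hf hj
  · exact (hn j hj).ge

theorem Submodule.map_mkQ_injOn {R M : Type*} [Ring R] [AddCommGroup M] [Module R M]
    (L : Submodule R M) : Set.InjOn (map L.mkQ) (Set.Ici L) := fun p hp q hq h ↦ by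
  simpa only [comap_map_mkQ, sup_of_le_right (Set.mem_Ici.mp hp),
    sup_of_le_right (Set.mem_Ici.mp hq)] using congrArg (comap L.mkQ) h

/-- Over a DVR `A`, a decreasing chain of submodules of a finitely generated module whose
term `M^d` has torsion quotient `M^d / M^∞` (elementwise: every `x ∈ M^d` is sent into
`M^∞ = ⋂ i, M^i` by some nonzero scalar) stabilizes at `M^∞`. -/
theorem chain_stabilizes_of_torsion_quotient (A : Type*) [CommRing A] [IsDomain A]
    [IsDiscreteValuationRing A] (M : Type*) [AddCommGroup M] [Module A M] [Module.Finite A M]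
    (N : ℕ → Submodule A M) (hdec : ∀ i j : ℕ, i ≤ j → N j ≤ N i)
    (htor : ∃ d : ℕ, ∀ x ∈ N d, ∃ a : A, a ≠ 0 ∧ a • x ∈ ⨅ i : ℕ, N i) :
    ∃ d' : ℕ, ∀ i ≥ d', N i = ⨅ j : ℕ, N j := by
  obtain ⟨d, hd⟩ := htor
  set L := ⨅ i, N i
  have hN : Antitone N := fun i j hij ↦ hdec i j hij
  have : IsArtinian A ((N d).map L.mkQ) := by
    have : Module.Finite A ((N d).map L.mkQ) :=
      Module.Finite.iff_fg.mpr ((IsNoetherian.noetherian (N d)).map _)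
    refine isArtinian_of_isTorsion (Submodule.isTorsion_map_mkQ fun x hx ↦ ?_)
    obtain ⟨a, ha, hax⟩ := hd x hx
    exact ⟨a, mem_nonZeroDivisors_of_ne_zero ha, hax⟩
  obtain ⟨n, hn⟩ := IsArtinian.exists_forall_ge_eq_of_antitone ((N d).map L.mkQ)
    (f := fun i ↦ (N i).map L.mkQ) (fun i j hij ↦ Submodule.map_mono (hN hij)) le_rfl
  have hstab : ∀ m ≥ n, N m = N n := fun m hm ↦
    L.map_mkQ_injOn (iInf_le N m) (iInf_le N n) (hn m hm)
  exact ⟨n, hN.forall_ge_eq_iInf hstab⟩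
end
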